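/- arXiv:1601.01915 — 3 statements merged into one kernel-verified Lean document; each statement's English description precedes it below -/
import Mathlib

section
/- Let k > 0, let x ∈ ℝ² with x ≠ 0, and let ξ ∈ ℝ² with |ξ| = 1. For each N ∈ ℕ set θ_n^{(N)} = (cos(2πn/N), sin(2πn/N)) for n = 1, …, N. Then the Riemann sums converge: lim_{N→∞} (1/N) Σ_{n=1}^{N} (θ_n^{(N)} · ξ) · exp(i k θ_n^{(N)} · x) = i · ((x · ξ)/|x|) · J₁(k|x|). (This is the discrete-to-continuum statement of Lemma 1: for sufficiently many equally distributed directions on S¹, the normalized sum approaches the circle average, which equals i (x̂·ξ) J₁(k|x|).) -/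
open MeasureTheory Real Filter

/-- The Bessel function of order 1 of the first kind, via its Bessel integral
representation `J₁(s) = (1/π) ∫₀^π cos(τ − s sin τ) dτ`. -/
noncomputable def J1 (s : ℝ) : ℝ :=
  (1 / π) * ∫ τ in (0:ℝ)..π, Real.cos (τ - s * Real.sin τ)

/-! The sums are right-endpoint Riemann sums, on `[0, 2π]`, of the continuous function
`t ↦ (θ(t)·ξ) e^{i k θ(t)·x}`, so they tend to `1/(2π)` times its integral. Writing
`x = |x| (cos φ, sin φ)` and using `2π`-periodicity to substitute `t = u + φ`, the integral
becomes `∫₀^{2π} (a cos u + b sin u) e^{i k|x| cos u} du` with `a = x̂·ξ`. The `sin u` term is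
odd under `u ↦ 2π − u`; shifting by `π/2` turns the `cos u` term into
`∫₀^{2π} sin u e^{i s sin u} du`, whose real part is again odd and whose imaginary part is
`π`-periodic and reduces to the Bessel integral, since `∫₀^π cos τ cos(s sin τ) dτ = 0`
(odd under `τ ↦ π − τ`). -/

open scoped Topology
open Complex (I)

section IntervalIntegral

variable {E : Type*} [NormedAddCommGroup E] [NormedSpace ℝ E]

theorem intervalIntegral.integral_eq_zero_of_comp_sub_left_eq_neg {f : ℝ → E} {a b : ℝ}
    (hf : ∀ u, f (a + b - u) = -f u) : ∫ u in a..b, f u = 0 := by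
  have h := intervalIntegral.integral_comp_sub_left f (a + b) (a := a) (b := b)
  simp only [hf, intervalIntegral.integral_neg, add_sub_cancel_right, add_sub_cancel_left] at h
  rw [neg_eq_iff_add_eq_zero, ← two_smul ℝ] at h
  exact (smul_eq_zero.mp h).resolve_left two_ne_zero

theorem Function.Periodic.intervalIntegral_comp_add_right {f : ℝ → E} {T : ℝ}
    (hf : Function.Periodic f T) (c : ℝ) : ∫ u in 0..T, f (u + c) = ∫ u in 0..T, f u := by
  rw [intervalIntegral.integral_comp_add_right, zero_add, add_comm T,
    hf.intervalIntegral_add_eq c 0, zero_add]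

end IntervalIntegral

section RiemannSum

variable {E : Type*} [NormedAddCommGroup E] [NormedSpace ℝ E] [CompleteSpace E] {f : ℝ → E}

theorem smul_sum_Icc_sub_integral_eq (hf : Continuous f) {N : ℕ} (hN : N ≠ 0) :
    (N : ℝ)⁻¹ • ∑ n ∈ Finset.Icc 1 N, f (n / N) - ∫ t in 0..1, f t =
      ∑ n ∈ Finset.range N,
        ∫ t in (n / N : ℝ)..((n + 1 : ℕ) / N), (f ((n + 1 : ℕ) / N) - f t) := by
  have hN' : (N : ℝ) ≠ 0 := Nat.cast_ne_zero.mpr hN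
  have hpiece : ∀ n : ℕ, ∫ t in (n / N : ℝ)..((n + 1 : ℕ) / N), (f ((n + 1 : ℕ) / N) - f t) =
      (N : ℝ)⁻¹ • f ((n + 1 : ℕ) / N) - ∫ t in (n / N : ℝ)..((n + 1 : ℕ) / N), f t :=
    fun n => by
      rw [intervalIntegral.integral_sub intervalIntegrable_const (hf.intervalIntegrable _ _),
        intervalIntegral.integral_const]
      congr 2
      push_cast
      field_simp
      ring
  have hsum : ∑ n ∈ Finset.Icc 1 N, f (n / N) = ∑ n ∈ Finset.range N, f ((n + 1 : ℕ) / N) := by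
    rw [← Finset.Ico_add_one_right_eq_Icc, Finset.sum_Ico_eq_sum_range, add_tsub_cancel_right]
    exact Finset.sum_congr rfl fun n _ => by rw [add_comm]
  rw [Finset.sum_congr rfl fun n _ => hpiece n, Finset.sum_sub_distrib, ← Finset.smul_sum, hsum,
    intervalIntegral.sum_integral_adjacent_intervals (a := fun n : ℕ => (n / N : ℝ))
      fun _ _ => hf.intervalIntegrable _ _]
  simp [hN']

theorem tendsto_smul_sum_Icc_atTop_integral (hf : Continuous f) :
    Tendsto (fun N : ℕ => (N : ℝ)⁻¹ • ∑ n ∈ Finset.Icc 1 N, f (n / N)) atTop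
      (𝓝 (∫ t in 0..1, f t)) := by
  rw [Metric.tendsto_atTop]
  intro ε hε
  obtain ⟨δ, hδ, hf_unif⟩ := Metric.uniformContinuousOn_iff.mp
    (isCompact_Icc.uniformContinuousOn_of_continuous hf.continuousOn) (ε / 2) (half_pos hε)
  obtain ⟨N₀, hN₀⟩ := exists_nat_one_div_lt hδ
  refine ⟨N₀ + 1, fun N hN => ?_⟩
  have hN₀N : (N₀ : ℝ) + 1 ≤ N := by exact_mod_cast hN
  have hN : (0 : ℝ) < N := by linarith [(N₀.cast_nonneg : (0 : ℝ) ≤ N₀)]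
  have hmesh : (N : ℝ)⁻¹ < δ := by
    refine lt_of_le_of_lt ?_ hN₀
    rw [one_div]
    gcongr
  have hpiece : ∀ n ∈ Finset.range N,
      ‖∫ t in (n / N : ℝ)..((n + 1 : ℕ) / N), (f ((n + 1 : ℕ) / N) - f t)‖ ≤
        ε / 2 * (N : ℝ)⁻¹ := by
    intro n hn
    have hn : (n + 1 : ℝ) ≤ N := by exact_mod_cast Finset.mem_range.mp hn
    have hlen : ((n + 1 : ℕ) : ℝ) / N - n / N = (N : ℝ)⁻¹ := by
      push_cast
      field_simp
      ring
    refine (intervalIntegral.norm_integral_le_of_norm_le_const fun t ht => ?_).trans_eq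
      (by rw [hlen, abs_of_pos (inv_pos.mpr hN)])
    rw [Set.uIoc_of_le (by gcongr; simp)] at ht
    have hright : ((n + 1 : ℕ) : ℝ) / N ∈ Set.Icc (0 : ℝ) 1 :=
      ⟨by positivity, by rw [div_le_one hN]; exact_mod_cast hn⟩
    have ht01 : t ∈ Set.Icc (0 : ℝ) 1 :=
      ⟨(by positivity : (0 : ℝ) ≤ n / N).trans ht.1.le, ht.2.trans hright.2⟩
    rw [← dist_eq_norm]
    refine (hf_unif _ hright _ ht01 ?_).le
    rw [Real.dist_eq, abs_of_nonneg (by linarith [ht.2])]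
    linarith [ht.1, ht.2]
  rw [dist_eq_norm, smul_sum_Icc_sub_integral_eq hf (by exact_mod_cast hN.ne')]
  calc _ ≤ ∑ n ∈ Finset.range N,
          ‖∫ t in (n / N : ℝ)..((n + 1 : ℕ) / N), (f ((n + 1 : ℕ) / N) - f t)‖ :=
        norm_sum_le _ _
    _ ≤ ∑ n ∈ Finset.range N, ε / 2 * (N : ℝ)⁻¹ := Finset.sum_le_sum hpiece
    _ = ε / 2 := by rw [Finset.sum_const, Finset.card_range, nsmul_eq_mul]; field_simp
    _ < ε := half_lt_self hε

end RiemannSum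

theorem integral_sin_mul_sin_sin_eq_pi_mul_J1 (s : ℝ) :
    ∫ τ in 0..π, sin τ * sin (s * sin τ) = π * J1 s := by
  have hcos : ∫ τ in 0..π, cos τ * cos (s * sin τ) = 0 :=
    intervalIntegral.integral_eq_zero_of_comp_sub_left_eq_neg fun τ => by
      simp [cos_pi_sub, sin_pi_sub]
  rw [J1, ← mul_assoc, mul_one_div_cancel pi_ne_zero, one_mul]
  simp_rw [cos_sub]
  rw [intervalIntegral.integral_add (by apply Continuous.intervalIntegrable; fun_prop)
      (by apply Continuous.intervalIntegrable; fun_prop), hcos, zero_add]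

theorem integral_sin_mul_sin_sin_eq_two_pi_mul_J1 (s : ℝ) :
    ∫ u in 0..2 * π, sin u * sin (s * sin u) = 2 * π * J1 s := by
  have hper : Function.Periodic (fun u => sin u * sin (s * sin u)) π := fun u => by
    simp [sin_add_pi]
  rw [two_mul, hper.intervalIntegral_add_eq_add 0 π
    (fun _ _ => by apply Continuous.intervalIntegrable; fun_prop), zero_add,
    integral_sin_mul_sin_sin_eq_pi_mul_J1]
  ring

theorem integral_sin_mul_exp_sin (s : ℝ) :
    ∫ u in 0..2 * π, (sin u : ℂ) * Complex.exp (I * (s * sin u : ℝ)) = 2 * π * J1 s * I := by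
  have hsplit : ∀ u : ℝ, (sin u : ℂ) * Complex.exp (I * (s * sin u : ℝ)) =
      (sin u * cos (s * sin u) : ℝ) + (sin u * sin (s * sin u) : ℝ) * I := fun u => by
    rw [mul_comm I, Complex.exp_mul_I]
    push_cast
    ring
  have hodd : ∫ u in 0..2 * π, sin u * cos (s * sin u) = 0 :=
    intervalIntegral.integral_eq_zero_of_comp_sub_left_eq_neg fun u => by
      simp [sin_two_pi_sub]
  simp_rw [hsplit]
  rw [intervalIntegral.integral_add (by apply Continuous.intervalIntegrable; fun_prop)
      (by apply Continuous.intervalIntegrable; fun_prop),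
    intervalIntegral.integral_mul_const, intervalIntegral.integral_ofReal,
    intervalIntegral.integral_ofReal, hodd, integral_sin_mul_sin_sin_eq_two_pi_mul_J1]
  push_cast
  ring

theorem integral_cos_mul_exp_cos (s : ℝ) :
    ∫ u in 0..2 * π, (cos u : ℂ) * Complex.exp (I * (s * cos u : ℝ)) = 2 * π * J1 s * I := by
  have hper : Function.Periodic
      (fun u : ℝ => (cos u : ℂ) * Complex.exp (I * (s * cos u : ℝ))) (2 * π) := fun u => by
    simp [cos_add_two_pi]
  rw [← hper.intervalIntegral_comp_add_right (-(π / 2)), ← integral_sin_mul_exp_sin]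
  simp only [← sub_eq_add_neg, cos_sub_pi_div_two]

theorem integral_sin_mul_exp_cos (s : ℝ) :
    ∫ u in 0..2 * π, (sin u : ℂ) * Complex.exp (I * (s * cos u : ℝ)) = 0 :=
  intervalIntegral.integral_eq_zero_of_comp_sub_left_eq_neg fun u => by
    simp [sin_two_pi_sub, cos_two_pi_sub]

theorem integral_mul_exp_cos (s a b : ℝ) :
    ∫ u in 0..2 * π, ((a * cos u + b * sin u : ℝ) : ℂ) * Complex.exp (I * (s * cos u : ℝ)) =
      2 * π * a * J1 s * I := by
  have hsplit : ∀ u : ℝ, ((a * cos u + b * sin u : ℝ) : ℂ) * Complex.exp (I * (s * cos u : ℝ)) =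
      a * ((cos u : ℂ) * Complex.exp (I * (s * cos u : ℝ))) +
        b * ((sin u : ℂ) * Complex.exp (I * (s * cos u : ℝ))) := fun u => by
    push_cast
    ring
  simp_rw [hsplit]
  rw [intervalIntegral.integral_add (by apply Continuous.intervalIntegrable; fun_prop)
      (by apply Continuous.intervalIntegrable; fun_prop),
    intervalIntegral.integral_const_mul, intervalIntegral.integral_const_mul,
    integral_cos_mul_exp_cos, integral_sin_mul_exp_cos]
  ring

theorem EuclideanSpace.exists_eq_norm_mul_cos_sin (x : EuclideanSpace ℝ (Fin 2)) :
    ∃ φ, x 0 = ‖x‖ * cos φ ∧ x 1 = ‖x‖ * sin φ := by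
  set z := Complex.orthonormalBasisOneI.repr.symm x
  have hz : ‖z‖ = ‖x‖ := LinearIsometryEquiv.norm_map _ _
  refine ⟨z.arg, ?_, ?_⟩
  · rw [← hz, Complex.norm_mul_cos_arg]; simp [z]
  · rw [← hz, Complex.norm_mul_sin_arg]; simp [z]

theorem integral_dot_mul_exp_I_dot (k : ℝ) (x ξ : EuclideanSpace ℝ (Fin 2)) (hx : x ≠ 0) :
    ∫ t in 0..2 * π, ((ξ 0 * cos t + ξ 1 * sin t : ℝ) : ℂ) *
        Complex.exp (I * k * ((x 0 * cos t + x 1 * sin t : ℝ) : ℂ)) =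
      2 * π * (inner ℝ x ξ / ‖x‖ : ℝ) * J1 (k * ‖x‖) * I := by
  obtain ⟨φ, hx0, hx1⟩ := x.exists_eq_norm_mul_cos_sin
  set a := ξ 0 * cos φ + ξ 1 * sin φ
  set b := ξ 1 * cos φ - ξ 0 * sin φ
  have ha : inner ℝ x ξ / ‖x‖ = a := by
    rw [EuclideanSpace.inner_eq_star_dotProduct]
    simp only [dotProduct, Pi.star_apply, star_trivial, Fin.sum_univ_two, Fin.isValue, hx0, hx1]
    field_simp
    ring
  set G : ℝ → ℂ := fun u => ((a * cos u + b * sin u : ℝ) : ℂ) *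
    Complex.exp (I * (k * ‖x‖ * cos u : ℝ))
  have hG : Function.Periodic G (2 * π) := fun u => by
    simp only [G, cos_add_two_pi, sin_add_two_pi]
  rw [ha, ← integral_mul_exp_cos (k * ‖x‖) a b, ← hG.intervalIntegral_comp_add_right (-φ)]
  refine intervalIntegral.integral_congr fun t _ => ?_
  simp only [G, ← sub_eq_add_neg, cos_sub, sin_sub, hx0, hx1]
  congr 2
  · linear_combination -(ξ 0 * cos t + ξ 1 * sin t) * sin_sq_add_cos_sq φ
  · push_cast
    ring

theorem stmt_3_general (k : ℝ) (x ξ : EuclideanSpace ℝ (Fin 2))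
    (hx : x ≠ 0) :
    Tendsto
      (fun N : ℕ =>
        (1 / (N : ℂ)) *
          ∑ n ∈ Finset.Icc 1 N,
            ((ξ 0 * Real.cos (2 * π * n / N) + ξ 1 * Real.sin (2 * π * n / N) : ℝ) : ℂ) *
              Complex.exp (Complex.I * (k : ℂ) *
                ((x 0 * Real.cos (2 * π * n / N) + x 1 * Real.sin (2 * π * n / N) : ℝ) : ℂ)))
      atTop
      (nhds (Complex.I * (((inner ℝ x ξ : ℝ) / ‖x‖ : ℝ) : ℂ) * (J1 (k * ‖x‖) : ℂ))) := by
  set F : ℝ → ℂ := fun t => ((ξ 0 * cos t + ξ 1 * sin t : ℝ) : ℂ) *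
    Complex.exp (I * k * ((x 0 * cos t + x 1 * sin t : ℝ) : ℂ))
  have hlim := tendsto_smul_sum_Icc_atTop_integral (f := fun u => F (2 * π * u)) (by fun_prop)
  rw [intervalIntegral.integral_comp_mul_left F two_pi_pos.ne', mul_zero, mul_one,
    integral_dot_mul_exp_I_dot k x ξ hx] at hlim
  convert hlim using 1
  · funext N
    simp only [F, Complex.real_smul, one_div, Complex.ofReal_inv, Complex.ofReal_natCast,
      mul_div_assoc]
  · rw [Complex.real_smul]
    push_cast
    field_simp

/-- Lemma 1 (discrete-to-continuum): with equidistributed directions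
`θₙ^{(N)} = (cos(2πn/N), sin(2πn/N))`, `n = 1, …, N`, the Riemann sums
`(1/N) Σₙ (θₙ·ξ) e^{i k θₙ·x}` converge to `i (x̂·ξ) J₁(k|x|)` as `N → ∞`. -/
theorem stmt_3 (k : ℝ) (hk : 0 < k) (x ξ : EuclideanSpace ℝ (Fin 2))
    (hx : x ≠ 0) (hξ : ‖ξ‖ = 1) :
    Tendsto
      (fun N : ℕ =>
        (1 / (N : ℂ)) *
          ∑ n ∈ Finset.Icc 1 N,
            ((ξ 0 * Real.cos (2 * π * n / N) + ξ 1 * Real.sin (2 * π * n / N) : ℝ) : ℂ) *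
              Complex.exp (Complex.I * (k : ℂ) *
                ((x 0 * Real.cos (2 * π * n / N) + x 1 * Real.sin (2 * π * n / N) : ℝ) : ℂ)))
      atTop
      (nhds (Complex.I * (((inner ℝ x ξ : ℝ) / ‖x‖ : ℝ) : ℂ) * (J1 (k * ‖x‖) : ℂ))) :=
  stmt_3_general k x ξ hx
end

section
/- Let N, M ∈ ℕ, k > 0, θ₁, …, θ_N ∈ ℝ² unit vectors, y₁, …, y_M ∈ ℝ², n₁, …, n_M ∈ ℝ² unit vectors, z ∈ ℝ² with z ≠ y_m for all m, and set β_m := (((z − y_m) · n_m)/|z − y_m|) · J₁(k|z − y_m|). For each n define Ψ₂(n) := 2 Σ_{m=1}^{M} (θ_n · n_m) β_m exp(i k θ_n · y_m). If for all m, m' ∈ {1, …, M}: (1/N) Σ_{n=1}^{N} (θ_n · n_m)(θ_n · n_{m'}) exp(i k θ_n · (y_m − y_{m'})) = 1/2 if m = m' and = 0 if m ≠ m', then (1/N) Σ_{n=1}^{N} Ψ₂(n) · conj(Ψ₂(n)) = 2 Σ_{m=1}^{M} β_m², i.e., equation (term4) of the paper: (1/N)Σ_n Ψ₂Ψ̄₂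 = 2 Σ_m ((z − y_m)/|z − y_m| · n_m)² J₁(k|z − y_m|)². -/
open MeasureTheory Real

/-!
Writing `Ψ₂(n) = Σₘ cₘ aₙₘ` with `cₘ = 2βₘ` and `aₙₘ = (θₙ·nₘ) e^{ik θₙ·yₘ}`, the mean of
`|Ψ₂(n)|²` over `n` is the quadratic form `Σₘₘ' cₘ c̄ₘ' Gₘₘ'` of the Gram matrix
`Gₘₘ' = (1/N) Σₙ aₙₘ āₙₘ'`. The orthogonality hypothesis says exactly that `G = ½ I`, so the
mean is `½ Σₘ 4βₘ² = 2 Σₘ βₘ²`.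
-/

open Finset ComplexConjugate

theorem mul_sum_mul_conj_of_gram {ι κ : Type*} [Fintype ι] [Fintype κ] [DecidableEq κ]
    (w g : ℂ) (a : ι → κ → ℂ) (c : κ → ℂ)
    (hgram : ∀ m m', w * ∑ n, a n m * conj (a n m') = if m = m' then g else 0) :
    w * ∑ n, (∑ m, c m * a n m) * conj (∑ m, c m * a n m) = g * ∑ m, c m * conj (c m) := by
  have expand : ∀ n, (∑ m, c m * a n m) * conj (∑ m, c m * a n m) =
      ∑ m, ∑ m', c m * conj (c m') * (a n m * conj (a n m')) := by
    intro n
    simp only [map_sum, map_mul, sum_mul_sum]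
    exact sum_congr rfl fun _ _ => sum_congr rfl fun _ _ => by ring
  calc w * ∑ n, (∑ m, c m * a n m) * conj (∑ m, c m * a n m)
      = ∑ m, ∑ m', c m * conj (c m') * (w * ∑ n, a n m * conj (a n m')) := by
        simp only [expand, mul_sum]
        rw [sum_comm]
        refine sum_congr rfl fun m _ => ?_
        rw [sum_comm]
        exact sum_congr rfl fun _ _ => sum_congr rfl fun _ _ => by ring
    _ = g * ∑ m, c m * conj (c m) := by
        simp [hgram, mul_sum, mul_comm]

theorem exp_I_mul_mul_conj_exp_I_mul (k s t : ℝ) :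
    Complex.exp (Complex.I * k * s) * conj (Complex.exp (Complex.I * k * t)) =
      Complex.exp (Complex.I * k * ((s - t : ℝ) : ℂ)) := by
  rw [← Complex.exp_conj, ← Complex.exp_add]
  simp only [map_mul, Complex.conj_I, Complex.conj_ofReal]
  push_cast
  ring_nf

theorem stmt_7_general (N M : ℕ) (k : ℝ) (θ : Fin N → EuclideanSpace ℝ (Fin 2))
    (y : Fin M → EuclideanSpace ℝ (Fin 2))
    (nv : Fin M → EuclideanSpace ℝ (Fin 2))
    (β : Fin M → ℝ)
    (Ψ₂ : Fin N → ℂ)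
    (hΨ₂ : ∀ n, Ψ₂ n =
      2 * ∑ m : Fin M,
          ((inner ℝ (θ n) (nv m) : ℝ) : ℂ) * (β m : ℂ) *
            Complex.exp (Complex.I * (k : ℂ) * ((inner ℝ (θ n) (y m) : ℝ) : ℂ)))
    (H1 : ∀ m m' : Fin M,
      (1 / (N : ℂ)) *
          ∑ n : Fin N,
            ((inner ℝ (θ n) (nv m) : ℝ) : ℂ) * ((inner ℝ (θ n) (nv m') : ℝ) : ℂ) *
              Complex.exp (Complex.I * (k : ℂ) * ((inner ℝ (θ n) (y m - y m') : ℝ) : ℂ)) =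
        if m = m' then 1 / 2 else 0) :
    (1 / (N : ℂ)) * ∑ n : Fin N, Ψ₂ n * (starRingEnd ℂ) (Ψ₂ n) =
      ((2 * ∑ m : Fin M, (β m) ^ 2 : ℝ) : ℂ) := by
  have hgram : ∀ m m', (1 / (N : ℂ)) * ∑ n,
      (((inner ℝ (θ n) (nv m) : ℝ) : ℂ) *
          Complex.exp (Complex.I * (k : ℂ) * ((inner ℝ (θ n) (y m) : ℝ) : ℂ))) *
        conj (((inner ℝ (θ n) (nv m') : ℝ) : ℂ) *
          Complex.exp (Complex.I * (k : ℂ) * ((inner ℝ (θ n) (y m') : ℝ) : ℂ))) =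
      if m = m' then 1 / 2 else 0 := by
    intro m m'
    rw [← H1 m m']
    congr 1
    refine sum_congr rfl fun n _ => ?_
    rw [map_mul, Complex.conj_ofReal, inner_sub_right, ← exp_I_mul_mul_conj_exp_I_mul]
    ring
  have hΨ₂' : ∀ n, Ψ₂ n = ∑ m, (2 * (β m : ℂ)) * (((inner ℝ (θ n) (nv m) : ℝ) : ℂ) *
      Complex.exp (Complex.I * (k : ℂ) * ((inner ℝ (θ n) (y m) : ℝ) : ℂ))) := fun n => by
    rw [hΨ₂, mul_sum]
    exact sum_congr rfl fun _ _ => by ring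
  simp only [hΨ₂', mul_sum_mul_conj_of_gram _ _ _ _ hgram, map_mul, Complex.conj_ofReal,
    map_ofNat]
  push_cast
  rw [mul_sum, mul_sum]
  exact sum_congr rfl fun _ _ => by ring

/-- Equation (term4) of the paper: with
`Ψ₂(n) = 2 Σₘ (θₙ·nₘ) βₘ e^{i k θₙ·yₘ}` and assuming the discrete orthogonality relations
`(1/N) Σₙ (θₙ·nₘ)(θₙ·nₘ') e^{i k θₙ·(yₘ − yₘ')} = (1/2) δ_{m m'}`, one has
`(1/N) Σₙ Ψ₂(n) conj(Ψ₂(n)) = 2 Σₘ βₘ²`. -/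
theorem stmt_7 (N M : ℕ) (k : ℝ) (hk : 0 < k)
    (θ : Fin N → EuclideanSpace ℝ (Fin 2)) (hθ : ∀ n, ‖θ n‖ = 1)
    (y : Fin M → EuclideanSpace ℝ (Fin 2))
    (nv : Fin M → EuclideanSpace ℝ (Fin 2)) (hnv : ∀ m, ‖nv m‖ = 1)
    (z : EuclideanSpace ℝ (Fin 2)) (hz : ∀ m, z ≠ y m)
    (β : Fin M → ℝ)
    (hβ : ∀ m, β m = ((inner ℝ (z - y m) (nv m) : ℝ) / ‖z - y m‖) * J1 (k * ‖z - y m‖))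
    (Ψ₂ : Fin N → ℂ)
    (hΨ₂ : ∀ n, Ψ₂ n =
      2 * ∑ m : Fin M,
          ((inner ℝ (θ n) (nv m) : ℝ) : ℂ) * (β m : ℂ) *
            Complex.exp (Complex.I * (k : ℂ) * ((inner ℝ (θ n) (y m) : ℝ) : ℂ)))
    (H1 : ∀ m m' : Fin M,
      (1 / (N : ℂ)) *
          ∑ n : Fin N,
            ((inner ℝ (θ n) (nv m) : ℝ) : ℂ) * ((inner ℝ (θ n) (nv m') : ℝ) : ℂ) *
              Complex.exp (Complex.I * (k : ℂ) * ((inner ℝ (θ n) (y m - y m') : ℝ) : ℂ)) =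
        if m = m' then 1 / 2 else 0) :
    (1 / (N : ℂ)) * ∑ n : Fin N, Ψ₂ n * (starRingEnd ℂ) (Ψ₂ n) =
      ((2 * ∑ m : Fin M, (β m) ^ 2 : ℝ) : ℂ) :=
  stmt_7_general N M k θ y nv β Ψ₂ hΨ₂ H1
end

section
/- For every t ∈ ℝ with |t| ≤ 1 and every s ∈ ℝ, 2 t² J₁(s)² ≤ 0.6772 < 1. (This is property (P2) of the paper: the quantity 2 ((z − y_m)/|z − y_m| · n(y_m))² J₁(k|z − y_m|)² is bounded by 2·(0.5819)² = 0.6772, which is strictly less than 1.) -/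
open MeasureTheory Real

/-!
Writing `J₁ x = (1/π) ∫₀^π sin τ sin (x sin τ) dτ`, its derivative is
`(1/π) ∫₀^π sin² τ cos (x sin τ) dτ`, which is nonincreasing on `[0, π]` because `cos` is
decreasing on `[0, π]`. Hence `J₁` is concave on `[0, π]` and lies below its tangent at
`a = 1.8412`, a point very close to its maximum; evaluating `J₁ a` and `J₁' a` through their
power series bounds `J₁` by `0.58189` on `[0, 3]`. For `x ≥ 3`, the recurrence
`x J₁' = x J₀ - J₁` makes the derivative of `J₀² + J₁²` equal to `-2 J₁² / x`, so
`J₁(x)² ≤ J₀(3)² + J₁(3)² ≈ 0.18`.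
Since `J₁` is odd and `0.58189² < 0.3386`, this gives `J₁² ≤ 0.3386`.
-/

open Finset Nat

noncomputable def cosTaylor (n : ℕ) (x : ℝ) : ℝ :=
  ∑ k ∈ range n, (-1) ^ k * x ^ (2 * k) / (2 * k)!

noncomputable def sinTaylor (n : ℕ) (x : ℝ) : ℝ :=
  ∑ k ∈ range n, (-1) ^ k * x ^ (2 * k + 1) / (2 * k + 1)!

lemma sum_range_two_mul_exp_series_mul_I (n : ℕ) (x : ℝ) :
    ∑ m ∈ range (2 * n), ((x : ℂ) * Complex.I) ^ m / m ! =
      cosTaylor n x + sinTaylor n x * Complex.I := by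
  induction n with
  | zero => simp [cosTaylor, sinTaylor]
  | succ n ih =>
    rw [show 2 * (n + 1) = 2 * n + 1 + 1 by ring, sum_range_succ, sum_range_succ, ih]
    have hI : Complex.I ^ (2 * n) = (-1) ^ n := by rw [pow_mul, Complex.I_sq]
    simp only [cosTaylor, sinTaylor, sum_range_succ, mul_pow, pow_succ, hI]
    push_cast
    ring

lemma abs_cos_sub_cosTaylor_le {n : ℕ} {x : ℝ} (hx : |x| ≤ n) :
    |cos x - cosTaylor n x| ≤ 2 * |x| ^ (2 * n) / (2 * n)! := by
  have h := Complex.exp_bound' (x := x * Complex.I) (n := 2 * n) (by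
    rw [norm_mul, Complex.norm_I, mul_one, Complex.norm_real, Real.norm_eq_abs,
      div_le_iff₀ (by positivity)]
    push_cast; linarith)
  rw [sum_range_two_mul_exp_series_mul_I] at h
  calc |cos x - cosTaylor n x|
      = |(Complex.exp (x * Complex.I) - (cosTaylor n x + sinTaylor n x * Complex.I)).re| := by
        simp [Complex.exp_ofReal_mul_I_re]
    _ ≤ _ := Complex.abs_re_le_norm _
    _ ≤ _ := h.trans_eq (by simp; ring)

lemma abs_sin_sub_sinTaylor_le {n : ℕ} {x : ℝ} (hx : |x| ≤ n) :
    |sin x - sinTaylor n x| ≤ 2 * |x| ^ (2 * n + 1) / (2 * n + 1)! := by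
  have h := Complex.exp_bound' (x := x * Complex.I) (n := 2 * n + 1) (by
    rw [norm_mul, Complex.norm_I, mul_one, Complex.norm_real, Real.norm_eq_abs,
      div_le_iff₀ (by positivity)]
    push_cast; linarith)
  have hreal : ((x : ℂ) * Complex.I) ^ (2 * n) / (2 * n)! =
      (((-1) ^ n * x ^ (2 * n) / (2 * n)! : ℝ) : ℂ) := by
    push_cast
    rw [mul_pow, pow_mul Complex.I, Complex.I_sq]
    ring
  rw [sum_range_succ, sum_range_two_mul_exp_series_mul_I, hreal] at h
  calc |sin x - sinTaylor n x|
      = |(Complex.exp (x * Complex.I) - (cosTaylor n x + sinTaylor n x * Complex.I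
          + (((-1) ^ n * x ^ (2 * n) / (2 * n)! : ℝ) : ℂ))).im| := by
        rw [Complex.sub_im, Complex.add_im, Complex.ofReal_im, Complex.exp_ofReal_mul_I_im]
        simp
    _ ≤ _ := Complex.abs_im_le_norm _
    _ ≤ _ := h.trans_eq (by simp; ring)

lemma integral_sin_pow_mul_cosTaylor (j n : ℕ) (x : ℝ) :
    ∫ τ in (0:ℝ)..π, sin τ ^ (2 * j) * cosTaylor n (x * sin τ) =
      π * ∑ k ∈ range n, (-1) ^ k * x ^ (2 * k) / (2 * k)! *
        ∏ i ∈ range (j + k), (2 * (i : ℝ) + 1) / (2 * i + 2) := by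
  simp_rw [cosTaylor, mul_sum]
  rw [intervalIntegral.integral_finsetSum fun k _ => by
    apply Continuous.intervalIntegrable; fun_prop]
  refine sum_congr rfl fun k _ => ?_
  rw [mul_left_comm, ← integral_sin_pow_even, ← intervalIntegral.integral_const_mul]
  congr 1 with τ
  ring

lemma integral_sin_pow_mul_sinTaylor (j n : ℕ) (x : ℝ) :
    ∫ τ in (0:ℝ)..π, sin τ ^ (2 * j + 1) * sinTaylor n (x * sin τ) =
      π * ∑ k ∈ range n, (-1) ^ k * x ^ (2 * k + 1) / (2 * k + 1)! *
        ∏ i ∈ range (j + k + 1), (2 * (i : ℝ) + 1) / (2 * i + 2) := by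
  simp_rw [sinTaylor, mul_sum]
  rw [intervalIntegral.integral_finsetSum fun k _ => by
    apply Continuous.intervalIntegrable; fun_prop]
  refine sum_congr rfl fun k _ => ?_
  rw [mul_left_comm, ← integral_sin_pow_even, ← intervalIntegral.integral_const_mul]
  congr 1 with τ
  ring

lemma abs_one_div_pi_mul_integral_sub_le {f g : ℝ → ℝ} (hf : Continuous f) (hg : Continuous g)
    {ε : ℝ} (h : ∀ τ, |f τ - g τ| ≤ ε) :
    |(1 / π) * (∫ τ in (0:ℝ)..π, f τ) - (1 / π) * ∫ τ in (0:ℝ)..π, g τ| ≤ ε := by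
  rw [← mul_sub, ← intervalIntegral.integral_sub (hf.intervalIntegrable _ _)
    (hg.intervalIntegrable _ _), abs_mul, abs_of_pos (by positivity), one_div_mul_eq_div,
    div_le_iff₀ pi_pos]
  simpa [abs_of_pos pi_pos, mul_comm] using intervalIntegral.norm_integral_le_of_norm_le_const
    (a := 0) (b := π) (f := fun τ => f τ - g τ) fun τ _ => h τ

lemma abs_sin_pow_mul_sub_le {p : ℕ} {u v ε : ℝ} (τ : ℝ) (h : |u - v| ≤ ε) :
    |sin τ ^ p * u - sin τ ^ p * v| ≤ ε := by
  rw [← mul_sub, abs_mul, abs_pow]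
  exact (mul_le_of_le_one_left (abs_nonneg _)
    (pow_le_one₀ (abs_nonneg _) (abs_sin_le_one τ))).trans h

lemma abs_mul_sin_le (x τ : ℝ) : |x * sin τ| ≤ |x| := by
  rw [abs_mul]; exact mul_le_of_le_one_right (abs_nonneg x) (abs_sin_le_one τ)

lemma abs_integral_sin_pow_mul_cos_sub_le (j : ℕ) {n : ℕ} {x : ℝ} (hx : |x| ≤ n) :
    |(1 / π) * (∫ τ in (0:ℝ)..π, sin τ ^ (2 * j) * cos (x * sin τ)) -
      ∑ k ∈ range n, (-1) ^ k * x ^ (2 * k) / (2 * k)! *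
        ∏ i ∈ range (j + k), (2 * (i : ℝ) + 1) / (2 * i + 2)| ≤
      2 * |x| ^ (2 * n) / (2 * n)! := by
  have hsum := integral_sin_pow_mul_cosTaylor j n x
  rw [← inv_mul_cancel_left₀ pi_ne_zero (∑ k ∈ range n, _), ← hsum, ← one_div]
  refine abs_one_div_pi_mul_integral_sub_le (by fun_prop) (by unfold cosTaylor; fun_prop)
    fun τ => abs_sin_pow_mul_sub_le τ ?_
  have hy := abs_mul_sin_le x τ
  refine (abs_cos_sub_cosTaylor_le (hy.trans hx)).trans ?_
  gcongr

lemma abs_integral_sin_pow_mul_sin_sub_le (j : ℕ) {n : ℕ} {x : ℝ} (hx : |x| ≤ n) :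
    |(1 / π) * (∫ τ in (0:ℝ)..π, sin τ ^ (2 * j + 1) * sin (x * sin τ)) -
      ∑ k ∈ range n, (-1) ^ k * x ^ (2 * k + 1) / (2 * k + 1)! *
        ∏ i ∈ range (j + k + 1), (2 * (i : ℝ) + 1) / (2 * i + 2)| ≤
      2 * |x| ^ (2 * n + 1) / (2 * n + 1)! := by
  have hsum := integral_sin_pow_mul_sinTaylor j n x
  rw [← inv_mul_cancel_left₀ pi_ne_zero (∑ k ∈ range n, _), ← hsum, ← one_div]
  refine abs_one_div_pi_mul_integral_sub_le (by fun_prop) (by unfold sinTaylor; fun_prop)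
    fun τ => abs_sin_pow_mul_sub_le τ ?_
  have hy := abs_mul_sin_le x τ
  refine (abs_sin_sub_sinTaylor_le (hy.trans hx)).trans ?_
  gcongr

noncomputable def J0 (x : ℝ) : ℝ :=
  (1 / π) * ∫ τ in (0:ℝ)..π, cos (x * sin τ)

noncomputable def J1deriv (x : ℝ) : ℝ :=
  (1 / π) * ∫ τ in (0:ℝ)..π, sin τ ^ 2 * cos (x * sin τ)

lemma integral_cos_mul_sin_mul_cos (x : ℝ) :
    ∫ τ in (0:ℝ)..π, cos (x * sin τ) * cos τ = 0 := by
  simpa using intervalIntegral.integral_comp_mul_deriv (a := 0) (b := π)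
    (g := fun y => cos (x * y)) (fun τ _ => hasDerivAt_sin τ) continuous_cos.continuousOn
    (by fun_prop)

lemma J1_eq_integral_sin_mul_sin (x : ℝ) :
    J1 x = (1 / π) * ∫ τ in (0:ℝ)..π, sin τ * sin (x * sin τ) := by
  have hsplit : ∀ τ, cos (τ - x * sin τ) = cos (x * sin τ) * cos τ + sin τ * sin (x * sin τ) :=
    fun τ => by rw [cos_sub]; ring
  simp_rw [J1, hsplit]
  rw [intervalIntegral.integral_add (by apply Continuous.intervalIntegrable; fun_prop)
    (by apply Continuous.intervalIntegrable; fun_prop), integral_cos_mul_sin_mul_cos, zero_add]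

lemma J1_neg (x : ℝ) : J1 (-x) = -J1 x := by
  simp [J1_eq_integral_sin_mul_sin, neg_mul, sin_neg, intervalIntegral.integral_neg]

lemma hasDerivAt_integral_sin_pow_mul_comp (p : ℕ) {f f' : ℝ → ℝ}
    (hf : ∀ y, HasDerivAt f (f' y) y) (hf' : Continuous f') (hf'_le : ∀ y, |f' y| ≤ 1) (x : ℝ) :
    HasDerivAt (fun x => ∫ τ in (0:ℝ)..π, sin τ ^ p * f (x * sin τ))
      (∫ τ in (0:ℝ)..π, sin τ ^ (p + 1) * f' (x * sin τ)) x := by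
  have hfc : Continuous f := continuous_iff_continuousAt.2 fun y => (hf y).continuousAt
  refine (intervalIntegral.hasDerivAt_integral_of_dominated_loc_of_deriv_le
    (F' := fun x τ => sin τ ^ (p + 1) * f' (x * sin τ)) (bound := fun _ => 1)
    (Metric.ball_mem_nhds x one_pos)
    (Filter.Eventually.of_forall fun _ => (by fun_prop : Continuous _).aestronglyMeasurable)
    ((by fun_prop : Continuous _).intervalIntegrable _ _)
    (by fun_prop : Continuous _).aestronglyMeasurable
    (Filter.Eventually.of_forall fun τ _ y _ => ?_) intervalIntegrable_const
    (Filter.Eventually.of_forall fun τ _ y _ => ?_)).2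
  · rw [Real.norm_eq_abs, abs_mul, abs_pow]
    exact mul_le_one₀ (pow_le_one₀ (abs_nonneg _) (abs_sin_le_one τ)) (abs_nonneg _) (hf'_le _)
  · exact (((hf _).comp y (hasDerivAt_mul_const (sin τ))).const_mul (sin τ ^ p)).congr_deriv
      (by ring)

lemma hasDerivAt_J0 (x : ℝ) : HasDerivAt J0 (-J1 x) x := by
  have h := (hasDerivAt_integral_sin_pow_mul_comp 0 hasDerivAt_cos (by fun_prop)
    (fun y => by rw [abs_neg]; exact abs_sin_le_one y) x).const_mul (1 / π)
  have hJ0 : (fun y => 1 / π * ∫ τ in (0:ℝ)..π, sin τ ^ 0 * cos (y * sin τ)) = J0 := by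
    ext y; simp [J0]
  rw [hJ0] at h
  refine h.congr_deriv ?_
  simp [J1_eq_integral_sin_mul_sin, intervalIntegral.integral_neg]

lemma hasDerivAt_J1 (x : ℝ) : HasDerivAt J1 (J1deriv x) x := by
  have h := (hasDerivAt_integral_sin_pow_mul_comp 1 hasDerivAt_sin (by fun_prop)
    abs_cos_le_one x).const_mul (1 / π)
  have hJ1 : (fun y => 1 / π * ∫ τ in (0:ℝ)..π, sin τ ^ 1 * sin (y * sin τ)) = J1 := by
    ext y; simp [J1_eq_integral_sin_mul_sin]
  rwa [hJ1] at h

lemma mul_J0_sub_J1deriv (x : ℝ) : x * (J0 x - J1deriv x) = J1 x := by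
  have hderiv : ∀ τ ∈ Set.uIcc (0:ℝ) π, HasDerivAt (fun τ => cos τ * sin (x * sin τ))
      (x * (cos τ ^ 2 * cos (x * sin τ)) - sin τ * sin (x * sin τ)) τ := fun τ _ =>
    ((hasDerivAt_cos τ).mul ((hasDerivAt_sin _).comp τ
      ((hasDerivAt_sin τ).const_mul x))).congr_deriv (by simp only [Function.comp_apply]; ring)
  have hint := intervalIntegral.integral_eq_sub_of_hasDerivAt hderiv
    (by apply Continuous.intervalIntegrable; fun_prop)
  rw [intervalIntegral.integral_sub (by apply Continuous.intervalIntegrable; fun_prop)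
    (by apply Continuous.intervalIntegrable; fun_prop),
    intervalIntegral.integral_const_mul] at hint
  simp only [sin_pi, sin_zero, mul_zero, sub_self] at hint
  have hcos : ∀ τ, cos (x * sin τ) - sin τ ^ 2 * cos (x * sin τ) = cos τ ^ 2 * cos (x * sin τ) :=
    fun τ => by linear_combination -cos (x * sin τ) * sin_sq_add_cos_sq τ
  rw [J0, J1deriv, J1_eq_integral_sin_mul_sin, ← mul_sub, ← intervalIntegral.integral_sub
    (by apply Continuous.intervalIntegrable; fun_prop)
    (by apply Continuous.intervalIntegrable; fun_prop)]
  simp_rw [hcos]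
  linear_combination (1 / π) * hint

lemma hasDerivAt_J0_sq_add_J1_sq (x : ℝ) :
    HasDerivAt (fun x => J0 x ^ 2 + J1 x ^ 2) (-2 * J1 x * (J0 x - J1deriv x)) x :=
  (((hasDerivAt_J0 x).pow 2).add ((hasDerivAt_J1 x).pow 2)).congr_deriv (by ring)

lemma antitoneOn_J0_sq_add_J1_sq : AntitoneOn (fun x => J0 x ^ 2 + J1 x ^ 2) (Set.Ici 0) := by
  refine antitoneOn_of_hasDerivWithinAt_nonpos (convex_Ici 0)
    (fun x _ => (hasDerivAt_J0_sq_add_J1_sq x).continuousAt.continuousWithinAt)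
    (fun x _ => (hasDerivAt_J0_sq_add_J1_sq x).hasDerivWithinAt) fun x hx => ?_
  rw [interior_Ici, Set.mem_Ioi] at hx
  rw [← mul_J0_sub_J1deriv x]
  nlinarith [mul_nonneg hx.le (sq_nonneg (J0 x - J1deriv x))]

lemma J1_nonneg {x : ℝ} (hx₀ : 0 ≤ x) (hxπ : x ≤ π) : 0 ≤ J1 x := by
  rw [J1_eq_integral_sin_mul_sin]
  refine mul_nonneg (by positivity) (intervalIntegral.integral_nonneg pi_pos.le fun τ hτ => ?_)
  have hsin := sin_nonneg_of_nonneg_of_le_pi hτ.1 hτ.2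
  exact mul_nonneg hsin (sin_nonneg_of_nonneg_of_le_pi (mul_nonneg hx₀ hsin)
    ((mul_le_of_le_one_right hx₀ (sin_le_one τ)).trans hxπ))

lemma antitoneOn_J1deriv : AntitoneOn J1deriv (Set.Icc 0 π) := by
  intro x hx y hy hxy
  refine mul_le_mul_of_nonneg_left (intervalIntegral.integral_mono_on pi_pos.le
    (by apply Continuous.intervalIntegrable; fun_prop)
    (by apply Continuous.intervalIntegrable; fun_prop) fun τ hτ => ?_) (by positivity)
  have hsin := sin_nonneg_of_nonneg_of_le_pi hτ.1 hτ.2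
  refine mul_le_mul_of_nonneg_left (cos_le_cos_of_nonneg_of_le_pi (mul_nonneg hx.1 hsin)
    ((mul_le_of_le_one_right hy.1 (sin_le_one τ)).trans hy.2) ?_) (sq_nonneg _)
  exact mul_le_mul_of_nonneg_right hxy hsin

lemma concaveOn_J1 : ConcaveOn ℝ (Set.Icc 0 π) J1 := by
  refine AntitoneOn.concaveOn_of_deriv (convex_Icc 0 π)
    (fun x _ => (hasDerivAt_J1 x).continuousAt.continuousWithinAt)
    (fun x _ => (hasDerivAt_J1 x).differentiableAt.differentiableWithinAt) ?_
  rw [show deriv J1 = J1deriv from funext fun x => (hasDerivAt_J1 x).deriv]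
  exact antitoneOn_J1deriv.mono interior_subset

lemma ConcaveOn.le_add_mul_sub_of_hasDerivAt {S : Set ℝ} {f : ℝ → ℝ} {f' x y : ℝ}
    (hf : ConcaveOn ℝ S f) (hx : x ∈ S) (hy : y ∈ S) (hf' : HasDerivAt f f' x) :
    f y ≤ f x + f' * (y - x) := by
  rcases lt_trichotomy y x with hyx | rfl | hxy
  · have h := hf.le_slope_of_hasDerivAt hy hx hyx hf'
    rw [slope_def_field, le_div_iff₀ (sub_pos.2 hyx)] at h
    linarith
  · simp
  · have h := hf.slope_le_of_hasDerivAt hx hy hxy hf'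
    rw [slope_def_field, div_le_iff₀ (sub_pos.2 hxy)] at h
    linarith

lemma abs_J0_sub_le {n : ℕ} {x : ℝ} (hx : |x| ≤ n) :
    |J0 x - ∑ k ∈ range n, (-1) ^ k * x ^ (2 * k) / (2 * k)! *
      ∏ i ∈ range k, (2 * (i : ℝ) + 1) / (2 * i + 2)| ≤ 2 * |x| ^ (2 * n) / (2 * n)! := by
  simpa [J0] using abs_integral_sin_pow_mul_cos_sub_le 0 hx

lemma abs_J1_sub_le {n : ℕ} {x : ℝ} (hx : |x| ≤ n) :
    |J1 x - ∑ k ∈ range n, (-1) ^ k * x ^ (2 * k + 1) / (2 * k + 1)! *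
      ∏ i ∈ range (k + 1), (2 * (i : ℝ) + 1) / (2 * i + 2)| ≤
      2 * |x| ^ (2 * n + 1) / (2 * n + 1)! := by
  simpa [J1_eq_integral_sin_mul_sin] using abs_integral_sin_pow_mul_sin_sub_le 0 hx

lemma abs_J1deriv_sub_le {n : ℕ} {x : ℝ} (hx : |x| ≤ n) :
    |J1deriv x - ∑ k ∈ range n, (-1) ^ k * x ^ (2 * k) / (2 * k)! *
      ∏ i ∈ range (k + 1), (2 * (i : ℝ) + 1) / (2 * i + 2)| ≤ 2 * |x| ^ (2 * n) / (2 * n)! := by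
  simpa [J1deriv, add_comm] using abs_integral_sin_pow_mul_cos_sub_le 1 hx

/-- The tangent is taken at `1.8412`, within `2·10⁻⁵` of the maximum `1.84118…` of `J₁`, where
`J₁' ≈ -7·10⁻⁶`; on `[0, 3]` it stays below `max J₁ + 2·10⁻⁵`. -/
lemma J1_le_of_le_three {x : ℝ} (hx₀ : 0 ≤ x) (hx₃ : x ≤ 3) : J1 x ≤ 0.58189 := by
  have hA := abs_J1_sub_le (n := 9) (x := 4603 / 2500) (by norm_num [abs_of_pos])
  have hD := abs_J1deriv_sub_le (n := 9) (x := 4603 / 2500) (by norm_num [abs_of_pos])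
  norm_num [sum_range_succ, prod_range_succ, factorial, abs_le] at hA hD
  have htan := concaveOn_J1.le_add_mul_sub_of_hasDerivAt (x := 4603 / 2500)
    ⟨by norm_num, by linarith [pi_gt_three]⟩ ⟨hx₀, by linarith [pi_gt_three]⟩ (hasDerivAt_J1 _)
  nlinarith

lemma J0_sq_add_J1_sq_three_le : J0 3 ^ 2 + J1 3 ^ 2 ≤ 0.3386 := by
  have hC := abs_J0_sub_le (n := 9) (x := 3) (by norm_num)
  have hA := abs_J1_sub_le (n := 9) (x := 3) (by norm_num)
  norm_num [sum_range_succ, prod_range_succ, factorial, abs_le] at hA hC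
  nlinarith

lemma J1_sq_le (x : ℝ) : J1 x ^ 2 ≤ 0.3386 := by
  wlog hx : 0 ≤ x generalizing x
  · simpa [J1_neg] using this (-x) (by linarith)
  rcases le_total x 3 with hx₃ | hx₃
  · nlinarith [J1_nonneg hx (hx₃.trans pi_gt_three.le), J1_le_of_le_three hx hx₃]
  · have hmono := antitoneOn_J0_sq_add_J1_sq (Set.mem_Ici.2 zero_le_three) hx hx₃
    nlinarith [sq_nonneg (J0 x), J0_sq_add_J1_sq_three_le]

/-- Property (P2) of the paper: for `|t| ≤ 1`, `2 t² J₁(s)² ≤ 0.6772 < 1`. -/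
theorem stmt_9 (t s : ℝ) (ht : |t| ≤ 1) :
    2 * t ^ 2 * J1 s ^ 2 ≤ 0.6772 ∧ (0.6772 : ℝ) < 1 := by
  refine ⟨?_, by norm_num⟩
  have ht2 : t ^ 2 ≤ 1 := by rw [← sq_abs]; exact pow_le_one₀ (abs_nonneg t) ht
  nlinarith [J1_sq_le s, sq_nonneg t, sq_nonneg (J1 s)]
end
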